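/- Let E be a finite graph in which every vertex lies on at most one cycle (E has disjoint cycles) and suppose E contains at least one cycle. Let C be a maximal cycle (no other cycle reaches C), and let K = ∪_{v ∈ C^0} T(v) where T(v) = {w ∈ E^0 : there is a path from w to v}. Then H = E^0 \ K is a hereditary and saturated subset of E^0. -/
import Mathlib


/-- Suppose a finite graph has disjoint cycles (any two
cycles sharing a vertex have the same vertex set), contains a cycle `c`, and
`c` is maximal (any cycle from which `c` is reachable has the same vertex set
as `c`).  Let `K = ⋃_{v ∈ c⁰} T(v)` where `T(v)` is the set of vertices from
which `v` is reachable.  Then `H = E⁰ \ K` is hereditary and saturated. -/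
theorem stmt13 (n : ℕ) (Ed : Type) [Fintype Ed] (s r : Ed → Fin n)
    (Reaches : Fin n → Fin n → Prop)
    (hReach : Reaches = Relation.ReflTransGen (fun u w => ∃ ed : Ed, s ed = u ∧ r ed = w))
    -- disjoint cycles:
    (hdisj : ∀ (m₁ : ℕ) (c₁ : Fin (m₁ + 1) → Ed) (m₂ : ℕ) (c₂ : Fin (m₂ + 1) → Ed),
      ((∀ j, r (c₁ j) = s (c₁ (j + 1))) ∧ Function.Injective (fun j => s (c₁ j))) →
      ((∀ j, r (c₂ j) = s (c₂ (j + 1))) ∧ Function.Injective (fun j => s (c₂ j))) →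
      (∃ j₁ j₂, s (c₁ j₁) = s (c₂ j₂)) →
      ∀ j₁, ∃ j₂, s (c₁ j₁) = s (c₂ j₂))
    -- the cycle c:
    (m : ℕ) (c : Fin (m + 1) → Ed)
    (hc : (∀ j, r (c j) = s (c (j + 1))) ∧ Function.Injective (fun j => s (c j)))
    -- maximality of c:
    (hmax : ∀ (m' : ℕ) (c' : Fin (m' + 1) → Ed),
      ((∀ j, r (c' j) = s (c' (j + 1))) ∧ Function.Injective (fun j => s (c' j))) →
      (∃ j' j, Reaches (s (c' j')) (s (c j))) →
      ∀ j', ∃ j, s (c' j') = s (c j))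
    (H : Set (Fin n))
    (hH : H = {v : Fin n | ¬ ∃ j, Reaches v (s (c j))}) :
    (∀ ed : Ed, s ed ∈ H → r ed ∈ H) ∧
    (∀ v : Fin n, (∃ ed, s ed = v) → (∀ ed, s ed = v → r ed ∈ H) → v ∈ H) := by
  subst hReach hH
  constructor
  · rintro ed hs ⟨j, hj⟩
    exact hs ⟨j, Relation.ReflTransGen.head ⟨ed, rfl, rfl⟩ hj⟩
  · rintro v - hall ⟨j, hj⟩
    rcases Relation.ReflTransGen.cases_head hj with h | ⟨w, ⟨ed, hse, hre⟩, hw⟩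
    · exact hall (c j) h.symm ⟨j + 1, (hc.1 j) ▸ Relation.ReflTransGen.refl⟩
    · exact hall ed hse ⟨j, hre ▸ hw⟩
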